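/- arXiv:q-alg/9703046 — 3 statements merged into one kernel-verified Lean document; each statement's English description precedes it below -/
import Mathlib

section
/- Let x ∈ ℂ, let c₁, c₂ ∈ ℝ, and let η₁, η₂, η₃ be nonzero real parameters. Assume all hyperbolic sines appearing in the denominators below are nonzero. Then F(x + iħc₂/2; η₁, η₂, c₁)·F(x − iħc₁/2; η₂, η₃, c₂) = F(x; η₁, η₃, c₁ + c₂). -/
/-!
`F` is a coboundary: with `ρ_η(y) = sinh(πη(y - iħB)) / sinh(πη(y + iħB))` one has
`F(x; η, η', c) = ρ_η(x + iħc/2) / ρ_{η'}(x - iħc/2)`. In the product on the left of the cocycle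
identity the middle factor `ρ_{η₂}(x + iħ(c₂ - c₁)/2)` cancels, and the outer ones are
`ρ_{η₁}` and `ρ_{η₃}` at `x ± iħ(c₁ + c₂)/2`.
-/

/-- The structure function `F(x; η, η̃, c)` of the `H⁺ H⁻` exchange relation of
`A_{ħ,η}(ĝ)`, with `b = B_{ij}` and `hbar = ħ`. -/
noncomputable def Ffn (hbar b η η' c : ℝ) (x : ℂ) : ℂ :=
  (Complex.sinh ((Real.pi : ℂ) * (η : ℂ) * (x - Complex.I * (hbar : ℂ) * ((b : ℂ) - (c : ℂ) / 2))) *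
      Complex.sinh ((Real.pi : ℂ) * (η' : ℂ) * (x + Complex.I * (hbar : ℂ) * ((b : ℂ) - (c : ℂ) / 2)))) /
    (Complex.sinh ((Real.pi : ℂ) * (η : ℂ) * (x + Complex.I * (hbar : ℂ) * ((b : ℂ) + (c : ℂ) / 2))) *
      Complex.sinh ((Real.pi : ℂ) * (η' : ℂ) * (x - Complex.I * (hbar : ℂ) * ((b : ℂ) + (c : ℂ) / 2))))

noncomputable def sinhRatio (hbar b η : ℝ) (y : ℂ) : ℂ :=
  Complex.sinh ((Real.pi : ℂ) * (η : ℂ) * (y - Complex.I * (hbar : ℂ) * (b : ℂ))) /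
    Complex.sinh ((Real.pi : ℂ) * (η : ℂ) * (y + Complex.I * (hbar : ℂ) * (b : ℂ)))

theorem Ffn_eq_div_sinhRatio (hbar b η η' c : ℝ) (x : ℂ) :
    Ffn hbar b η η' c x =
      sinhRatio hbar b η (x + Complex.I * (hbar : ℂ) * (c : ℂ) / 2) /
        sinhRatio hbar b η' (x - Complex.I * (hbar : ℂ) * (c : ℂ) / 2) := by
  rw [Ffn, sinhRatio, sinhRatio, div_div_div_eq]
  congr 4 <;> ring

theorem Ffn_cocycle_general (hbar b : ℝ) (x : ℂ) (c₁ c₂ : ℝ) (η₁ η₂ η₃ : ℝ)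
    (hd2 : Complex.sinh ((Real.pi : ℂ) * (η₂ : ℂ) *
      ((x + Complex.I * (hbar : ℂ) * (c₂ : ℂ) / 2) -
        Complex.I * (hbar : ℂ) * ((b : ℂ) + (c₁ : ℂ) / 2))) ≠ 0)
    (hd3 : Complex.sinh ((Real.pi : ℂ) * (η₂ : ℂ) *
      ((x - Complex.I * (hbar : ℂ) * (c₁ : ℂ) / 2) +
        Complex.I * (hbar : ℂ) * ((b : ℂ) + (c₂ : ℂ) / 2))) ≠ 0) :
    Ffn hbar b η₁ η₂ c₁ (x + Complex.I * (hbar : ℂ) * (c₂ : ℂ) / 2) *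
        Ffn hbar b η₂ η₃ c₂ (x - Complex.I * (hbar : ℂ) * (c₁ : ℂ) / 2) =
      Ffn hbar b η₁ η₃ (c₁ + c₂) x := by
  have hmid : sinhRatio hbar b η₂
      (x + Complex.I * (hbar : ℂ) * (c₂ : ℂ) / 2 - Complex.I * (hbar : ℂ) * (c₁ : ℂ) / 2) ≠ 0 :=
    div_ne_zero (by convert hd2 using 3; ring) (by convert hd3 using 3; ring)
  rw [Ffn_eq_div_sinhRatio, Ffn_eq_div_sinhRatio, sub_add_eq_add_sub, div_mul_div_cancel₀ hmid,
    Ffn_eq_div_sinhRatio]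
  congr 2 <;> push_cast <;> ring

/-- the cocycle identity
`F(x + iħc₂/2; η₁, η₂, c₁)·F(x − iħc₁/2; η₂, η₃, c₂) = F(x; η₁, η₃, c₁ + c₂)`
verifying that `Δ⁺` maps the `H⁺H⁻` relation to that of the combined algebra. -/
theorem Ffn_cocycle (hbar b : ℝ) (x : ℂ) (c₁ c₂ : ℝ) (η₁ η₂ η₃ : ℝ)
    (h₁ : η₁ ≠ 0) (h₂ : η₂ ≠ 0) (h₃ : η₃ ≠ 0)
    (hd1 : Complex.sinh ((Real.pi : ℂ) * (η₁ : ℂ) *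
      ((x + Complex.I * (hbar : ℂ) * (c₂ : ℂ) / 2) +
        Complex.I * (hbar : ℂ) * ((b : ℂ) + (c₁ : ℂ) / 2))) ≠ 0)
    (hd2 : Complex.sinh ((Real.pi : ℂ) * (η₂ : ℂ) *
      ((x + Complex.I * (hbar : ℂ) * (c₂ : ℂ) / 2) -
        Complex.I * (hbar : ℂ) * ((b : ℂ) + (c₁ : ℂ) / 2))) ≠ 0)
    (hd3 : Complex.sinh ((Real.pi : ℂ) * (η₂ : ℂ) *
      ((x - Complex.I * (hbar : ℂ) * (c₁ : ℂ) / 2) +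
        Complex.I * (hbar : ℂ) * ((b : ℂ) + (c₂ : ℂ) / 2))) ≠ 0)
    (hd4 : Complex.sinh ((Real.pi : ℂ) * (η₃ : ℂ) *
      ((x - Complex.I * (hbar : ℂ) * (c₁ : ℂ) / 2) -
        Complex.I * (hbar : ℂ) * ((b : ℂ) + (c₂ : ℂ) / 2))) ≠ 0)
    (hd5 : Complex.sinh ((Real.pi : ℂ) * (η₁ : ℂ) *
      (x + Complex.I * (hbar : ℂ) * ((b : ℂ) + ((c₁ : ℂ) + (c₂ : ℂ)) / 2))) ≠ 0)
    (hd6 : Complex.sinh ((Real.pi : ℂ) * (η₃ : ℂ) *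
      (x - Complex.I * (hbar : ℂ) * ((b : ℂ) + ((c₁ : ℂ) + (c₂ : ℂ)) / 2))) ≠ 0) :
    Ffn hbar b η₁ η₂ c₁ (x + Complex.I * (hbar : ℂ) * (c₂ : ℂ) / 2) *
        Ffn hbar b η₂ η₃ c₂ (x - Complex.I * (hbar : ℂ) * (c₁ : ℂ) / 2) =
      Ffn hbar b η₁ η₃ (c₁ + c₂) x :=
  Ffn_cocycle_general hbar b x c₁ c₂ η₁ η₂ η₃ hd2 hd3
end

section
/- Let x ∈ ℂ, let c₁, c₂ ∈ ℝ, and let η₁, η₂ be nonzero real parameters. Assume all hyperbolic sines appearing in the denominators below are nonzero. Then: (1) h(x + iħc₂/4; η₁, c₁) = h(x; η₁, c₁ + c₂); and (2) F(x + iħ(c₂ − c₁)/4; η₁, η₂, c₁)·h(x − 3iħc₁/4; η₂, c₂) = h(x; η₁, c₁ + c₂). -/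
/-- The structure function `h(x; η, c)` of the `H⁺ E` exchange relation of
`A_{ħ,η}(ĝ)`, with `b = B_{ij}` and `hbar = ħ`. -/
noncomputable def hFn (hbar b η c : ℝ) (x : ℂ) : ℂ :=
  Complex.sinh ((Real.pi : ℂ) * (η : ℂ) * (x - Complex.I * (hbar : ℂ) * ((b : ℂ) - (c : ℂ) / 4))) /
    Complex.sinh ((Real.pi : ℂ) * (η : ℂ) * (x + Complex.I * (hbar : ℂ) * ((b : ℂ) + (c : ℂ) / 4)))

/-! A shift `x ↦ x + iħd/4` of the argument of `h` is the same as the shift `c ↦ c + d` of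
the central charge. The `η'`-factor of `F(·; η, η', c)` is the reciprocal of `h(·; η', c')` at the
point shifted by `-iħ(2c + c')/4`, so in the product it cancels and leaves the `η`-factor of `F`,
which is `h(·; η, 2c)`. -/

open Complex

theorem hFn_add_shift (hbar b η c d : ℝ) (x : ℂ) :
    hFn hbar b η c (x + I * hbar * d / 4) = hFn hbar b η (c + d) x := by
  unfold hFn
  push_cast
  ring_nf

theorem Ffn_mul_hFn (hbar b η η' c c' : ℝ) (x : ℂ)
    (hU : sinh (Real.pi * η' * (x - I * hbar * (b + c / 2))) ≠ 0)
    (hV : sinh (Real.pi * η' * ((x - I * hbar * (2 * c + c') / 4) + I * hbar * (b + c' / 4))) ≠ 0) :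
    Ffn hbar b η η' c x * hFn hbar b η' c' (x - I * hbar * (2 * c + c') / 4) =
      hFn hbar b η (2 * c) x := by
  have hnum : x - I * hbar * (2 * c + c') / 4 - I * hbar * (b - c' / 4) =
      x - I * hbar * (b + c / 2) := by ring
  have hden : x - I * hbar * (2 * c + c') / 4 + I * hbar * (b + c' / 4) =
      x + I * hbar * (b - c / 2) := by ring
  rw [hden] at hV
  have h2c : ((2 * c : ℝ) : ℂ) / 4 = c / 2 := by push_cast; ring
  unfold Ffn hFn
  rw [hnum, hden, h2c, mul_div_mul_comm, mul_assoc, div_mul_div_cancel₀ hU, div_self hV, mul_one]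

theorem hFn_coproduct_general (hbar b : ℝ) (x : ℂ) (c₁ c₂ : ℝ) (η₁ η₂ : ℝ)
    (hd4 : Complex.sinh ((Real.pi : ℂ) * (η₂ : ℂ) *
      ((x + Complex.I * (hbar : ℂ) * ((c₂ : ℂ) - (c₁ : ℂ)) / 4) -
        Complex.I * (hbar : ℂ) * ((b : ℂ) + (c₁ : ℂ) / 2))) ≠ 0)
    (hd5 : Complex.sinh ((Real.pi : ℂ) * (η₂ : ℂ) *
      ((x - 3 * Complex.I * (hbar : ℂ) * (c₁ : ℂ) / 4) +
        Complex.I * (hbar : ℂ) * ((b : ℂ) + (c₂ : ℂ) / 4))) ≠ 0) :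
    hFn hbar b η₁ c₁ (x + Complex.I * (hbar : ℂ) * (c₂ : ℂ) / 4) =
        hFn hbar b η₁ (c₁ + c₂) x ∧
      Ffn hbar b η₁ η₂ c₁ (x + Complex.I * (hbar : ℂ) * ((c₂ : ℂ) - (c₁ : ℂ)) / 4) *
          hFn hbar b η₂ c₂ (x - 3 * Complex.I * (hbar : ℂ) * (c₁ : ℂ) / 4) =
        hFn hbar b η₁ (c₁ + c₂) x := by
  refine ⟨hFn_add_shift hbar b η₁ c₁ c₂ x, ?_⟩
  have hshift : x - 3 * I * hbar * c₁ / 4 =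
      x + I * hbar * ((c₂ : ℂ) - c₁) / 4 - I * hbar * (2 * c₁ + c₂) / 4 := by ring
  rw [hshift] at hd5 ⊢
  rw [Ffn_mul_hFn hbar b η₁ η₂ c₁ c₂ _ hd4 hd5, ← Complex.ofReal_sub, hFn_add_shift]
  congr 1
  ring

/-- the scalar identities verifying that `Δ⁺` preserves the `H⁺–E`
exchange relation: (1) `h(x + iħc₂/4; η₁, c₁) = h(x; η₁, c₁ + c₂)` (the term `E⊗1`), and
(2) `F(x + iħ(c₂ − c₁)/4; η₁, η₂, c₁)·h(x − 3iħc₁/4; η₂, c₂) = h(x; η₁, c₁ + c₂)`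
(the term `H⁻⊗E`). -/
theorem hFn_coproduct (hbar b : ℝ) (x : ℂ) (c₁ c₂ : ℝ) (η₁ η₂ : ℝ)
    (h₁ : η₁ ≠ 0) (h₂ : η₂ ≠ 0)
    (hd1 : Complex.sinh ((Real.pi : ℂ) * (η₁ : ℂ) *
      ((x + Complex.I * (hbar : ℂ) * (c₂ : ℂ) / 4) +
        Complex.I * (hbar : ℂ) * ((b : ℂ) + (c₁ : ℂ) / 4))) ≠ 0)
    (hd2 : Complex.sinh ((Real.pi : ℂ) * (η₁ : ℂ) *
      (x + Complex.I * (hbar : ℂ) * ((b : ℂ) + ((c₁ : ℂ) + (c₂ : ℂ)) / 4))) ≠ 0)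
    (hd3 : Complex.sinh ((Real.pi : ℂ) * (η₁ : ℂ) *
      ((x + Complex.I * (hbar : ℂ) * ((c₂ : ℂ) - (c₁ : ℂ)) / 4) +
        Complex.I * (hbar : ℂ) * ((b : ℂ) + (c₁ : ℂ) / 2))) ≠ 0)
    (hd4 : Complex.sinh ((Real.pi : ℂ) * (η₂ : ℂ) *
      ((x + Complex.I * (hbar : ℂ) * ((c₂ : ℂ) - (c₁ : ℂ)) / 4) -
        Complex.I * (hbar : ℂ) * ((b : ℂ) + (c₁ : ℂ) / 2))) ≠ 0)
    (hd5 : Complex.sinh ((Real.pi : ℂ) * (η₂ : ℂ) *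
      ((x - 3 * Complex.I * (hbar : ℂ) * (c₁ : ℂ) / 4) +
        Complex.I * (hbar : ℂ) * ((b : ℂ) + (c₂ : ℂ) / 4))) ≠ 0) :
    hFn hbar b η₁ c₁ (x + Complex.I * (hbar : ℂ) * (c₂ : ℂ) / 4) =
        hFn hbar b η₁ (c₁ + c₂) x ∧
      Ffn hbar b η₁ η₂ c₁ (x + Complex.I * (hbar : ℂ) * ((c₂ : ℂ) - (c₁ : ℂ)) / 4) *
          hFn hbar b η₂ c₂ (x - 3 * Complex.I * (hbar : ℂ) * (c₁ : ℂ) / 4) =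
        hFn hbar b η₁ (c₁ + c₂) x :=
  hFn_coproduct_general hbar b x c₁ c₂ η₁ η₂ hd4 hd5
end

section
/- Fix ħ, B, c ∈ ℝ and x ∈ ℂ with x + iħ(B + c/2) ≠ 0 and x − iħ(B + c/2) ≠ 0. For nonzero real η near 0 set η'(η) = η/(1 + ηħc) (so that 1/η'(η) − 1/η = ħc). Then, as η tends to 0 through nonzero real values, F(x; η, η'(η), c) tends to [(x − iħ(B − c/2))·(x + iħ(B − c/2))]/[(x + iħ(B + c/2))·(x − iħ(B + c/2))]. -/
open Filter Topology

/-! Each factor `sinh (π η z)` of `F` vanishes at `η = 0` with derivative `π z`, and so does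
`sinh (π η'(η) z)` because `η'(η) = η + O(η²)`. Dividing numerator and denominator by `η²`, the
limit is the quotient of these derivatives, in which the factors `π` cancel. -/

theorem tendsto_div_self_of_hasDerivAt_zero {f : ℝ → ℂ} {f' : ℂ} (hf : HasDerivAt f f' 0)
    (hf0 : f 0 = 0) : Tendsto (fun t : ℝ => f t / t) (𝓝[≠] 0) (𝓝 f') := by
  refine hf.tendsto_slope_zero.congr fun t => ?_
  simp [hf0, div_eq_inv_mul, Complex.real_smul]

theorem hasDerivAt_csinh_mul_ofReal_mul {φ : ℝ → ℝ} {φ' t : ℝ} (hφ : HasDerivAt φ φ' t)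
    (a z : ℂ) :
    HasDerivAt (fun s : ℝ => Complex.sinh (a * φ s * z))
      (Complex.cosh (a * φ t * z) * (a * φ' * z)) t :=
  (Complex.hasDerivAt_sinh _).comp t ((hφ.ofReal_comp.const_mul a).mul_const z)

theorem tendsto_csinh_mul_ofReal_mul_div {φ : ℝ → ℝ} (hφ : HasDerivAt φ 1 0) (hφ0 : φ 0 = 0)
    (a z : ℂ) :
    Tendsto (fun η : ℝ => Complex.sinh (a * φ η * z) / η) (𝓝[≠] 0) (𝓝 (a * z)) := by
  have h := hasDerivAt_csinh_mul_ofReal_mul hφ a z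
  simp only [hφ0, Complex.ofReal_zero, Complex.ofReal_one, mul_zero, zero_mul, Complex.cosh_zero,
    one_mul, mul_one] at h
  exact tendsto_div_self_of_hasDerivAt_zero h (by simp [hφ0])

theorem hasDerivAt_div_one_add_mul (k : ℝ) :
    HasDerivAt (fun η : ℝ => η / (1 + η * k)) 1 0 := by
  simpa using (hasDerivAt_id' (0 : ℝ)).fun_div
    (((hasDerivAt_id' (0 : ℝ)).mul_const k).const_add 1) (by simp)

theorem Filter.Tendsto.mul_div_mul_of_tendsto_div_self {f g u v : ℝ → ℂ} {α β γ δ : ℂ}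
    (hf : Tendsto (fun t : ℝ => f t / t) (𝓝[≠] 0) (𝓝 α))
    (hg : Tendsto (fun t : ℝ => g t / t) (𝓝[≠] 0) (𝓝 β))
    (hu : Tendsto (fun t : ℝ => u t / t) (𝓝[≠] 0) (𝓝 γ))
    (hv : Tendsto (fun t : ℝ => v t / t) (𝓝[≠] 0) (𝓝 δ)) (hγδ : γ * δ ≠ 0) :
    Tendsto (fun t => f t * g t / (u t * v t)) (𝓝[≠] 0) (𝓝 (α * β / (γ * δ))) := by
  refine ((hf.mul hg).div (hu.mul hv) hγδ).congr' ?_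
  filter_upwards [self_mem_nhdsWithin] with t ht
  have ht : (t : ℂ) ≠ 0 := Complex.ofReal_ne_zero.mpr ht
  simp only [Pi.div_apply]
  field_simp

/-- with `η'(η) = η/(1 + ηħc)` (so that `1/η' − 1/η = ħc`), the structure
function `F(x; η, η'(η), c)` tends, as the real parameter `η → 0` through nonzero values,
to the rational structure function of the Yangian double with center `DY_ħ(g)_c`. -/
theorem Ffn_tendsto_yangian (hbar b c : ℝ) (x : ℂ)
    (h1 : x + Complex.I * (hbar : ℂ) * ((b : ℂ) + (c : ℂ) / 2) ≠ 0)
    (h2 : x - Complex.I * (hbar : ℂ) * ((b : ℂ) + (c : ℂ) / 2) ≠ 0) :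
    Tendsto (fun η : ℝ => Ffn hbar b η (η / (1 + η * hbar * c)) c x)
      (𝓝[≠] (0 : ℝ))
      (𝓝 (((x - Complex.I * (hbar : ℂ) * ((b : ℂ) - (c : ℂ) / 2)) *
            (x + Complex.I * (hbar : ℂ) * ((b : ℂ) - (c : ℂ) / 2))) /
          ((x + Complex.I * (hbar : ℂ) * ((b : ℂ) + (c : ℂ) / 2)) *
            (x - Complex.I * (hbar : ℂ) * ((b : ℂ) + (c : ℂ) / 2))))) := by
  have hη' : HasDerivAt (fun η : ℝ => η / (1 + η * hbar * c)) 1 0 := by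
    simpa only [mul_assoc] using hasDerivAt_div_one_add_mul (hbar * c)
  have hπ : (Real.pi : ℂ) ≠ 0 := Complex.ofReal_ne_zero.mpr Real.pi_ne_zero
  have lim_η := tendsto_csinh_mul_ofReal_mul_div (hasDerivAt_id' 0) rfl (Real.pi : ℂ)
  have lim_η' := tendsto_csinh_mul_ofReal_mul_div hη' (by simp) (Real.pi : ℂ)
  unfold Ffn
  convert (lim_η _).mul_div_mul_of_tendsto_div_self (lim_η' _) (lim_η _) (lim_η' _)
    (mul_ne_zero (mul_ne_zero hπ h1) (mul_ne_zero hπ h2)) using 2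
  rw [mul_mul_mul_comm, mul_mul_mul_comm _ _ (Real.pi : ℂ),
    mul_div_mul_left _ _ (mul_ne_zero hπ hπ)]
end
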